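/- arXiv:2201.08767 — 4 statements merged into one kernel-verified Lean document; each statement's English description precedes it below -/
import Mathlib

section
/- Let k ≥ 3 and let q be a prime power with q ≤ k − 1. Then there exists a k-edge-colouring of K_ℕ in which every monochromatic path P satisfies d̄(P) ≤ 1/q. -/
open Filter

/-- Upper density of a set of positive integers:
`limsup_{n→∞} |A ∩ {1,…,n}| / n`. -/
noncomputable def upperDensity (A : Set ℕ+) : ℝ :=
  Filter.limsup (fun n : ℕ => (Nat.card {a : ℕ+ // a ∈ A ∧ (a : ℕ) ≤ n} : ℝ) / n) Filter.atTop

/-- Adjacency in the complete bipartite graph with parts `V` and `W`. -/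
def bipAdj (V W : Set ℕ+) (x y : ℕ+) : Prop :=
  (x ∈ V ∧ y ∈ W) ∨ (x ∈ W ∧ y ∈ V)

/-- Adjacency in the complete graph on the positive integers. -/
def completeAdj (x y : ℕ+) : Prop := x ≠ y

/-- `P` is the vertex set of a (finite or one-way infinite) path of colour `i`
in the graph with adjacency `Adj`, whose edges are coloured by `c`. -/
def IsMonoPath {k : ℕ} (Adj : ℕ+ → ℕ+ → Prop) (c : Sym2 ℕ+ → Fin k) (i : Fin k)
    (P : Set ℕ+) : Prop :=
  (∃ (n : ℕ) (f : Fin n → ℕ+), Function.Injective f ∧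
    (∀ (j : ℕ) (h : j + 1 < n),
      Adj (f ⟨j, Nat.lt_of_succ_lt h⟩) (f ⟨j + 1, h⟩) ∧
      c s(f ⟨j, Nat.lt_of_succ_lt h⟩, f ⟨j + 1, h⟩) = i) ∧
    P = Set.range f) ∨
  (∃ f : ℕ → ℕ+, Function.Injective f ∧
    (∀ j : ℕ, Adj (f j) (f (j + 1)) ∧ c s(f j, f (j + 1)) = i) ∧
    P = Set.range f)

/-!
Identify `ℕ+` periodically, with period `q²`, with the points of the affine plane over the field
with `q` elements, and colour the edge `xy` by the direction of the line through the images of `x`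
and `y` (there are `q + 1 ≤ k` directions). Along a monochromatic path every edge has the same
direction `d`, so all its vertices are mapped into a single line of direction `d`. A line has `q`
of the `q²` points, so the path lies in `q` residue classes modulo `q²` and has upper density
at most `q / q² = 1 / q`.
-/

open Finset

lemma card_le_of_mod_mem (A : Set ℕ+) (m : ℕ) (R : Finset ℕ)
    (hA : ∀ a ∈ A, (a : ℕ) % m ∈ R) (n : ℕ) :
    Nat.card {a : ℕ+ // a ∈ A ∧ (a : ℕ) ≤ n} ≤ #R * (n / m + 1) := by
  let g : {a : ℕ+ // a ∈ A ∧ (a : ℕ) ≤ n} → R × Fin (n / m + 1) := fun a =>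
    (⟨(a.1 : ℕ) % m, hA a.1 a.2.1⟩,
      ⟨(a.1 : ℕ) / m, Nat.lt_succ_of_le (Nat.div_le_div_right a.2.2)⟩)
  have hg : Function.Injective g := by
    intro a b hab
    simp only [g, Prod.mk.injEq, Subtype.mk.injEq, Fin.mk.injEq] at hab
    apply Subtype.ext
    apply PNat.coe_injective
    rw [← Nat.div_add_mod (a.1 : ℕ) m, ← Nat.div_add_mod (b.1 : ℕ) m, hab.1, hab.2]
  simpa [Nat.card_prod] using Nat.card_le_card_of_injective g hg

lemma upperDensity_le_of_card_le (A : Set ℕ+) (r m : ℕ)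
    (hcount : ∀ n, Nat.card {a : ℕ+ // a ∈ A ∧ (a : ℕ) ≤ n} ≤ r * (n / m + 1)) :
    upperDensity A ≤ r / m := by
  set f : ℕ → ℝ := fun n => (Nat.card {a : ℕ+ // a ∈ A ∧ (a : ℕ) ≤ n} : ℝ) / n
  have hbound : Tendsto (fun n : ℕ => (r / m + r / n : ℝ)) atTop (nhds (r / m)) := by
    simpa using tendsto_const_nhds.add (tendsto_const_div_atTop_nhds_zero_nat (r : ℝ))
  have hle : f ≤ᶠ[atTop] fun n => r / m + r / n := by
    filter_upwards [eventually_gt_atTop 0] with n hn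
    have hn' : (0 : ℝ) < n := Nat.cast_pos.2 hn
    calc f n ≤ ((r * (n / m + 1) : ℕ) : ℝ) / n :=
          div_le_div_of_nonneg_right (Nat.cast_le.2 (hcount n)) hn'.le
      _ ≤ (r * ((n : ℝ) / m + 1)) / n := by
          push_cast
          gcongr
          exact Nat.cast_div_le
      _ = r / m + r / n := by
          field_simp
  rw [upperDensity, ← hbound.limsup_eq]
  exact limsup_le_limsup hle (isCoboundedUnder_le_of_le atTop fun n => by positivity)
    hbound.isBoundedUnder_le

lemma upperDensity_le_of_mod_mem (A : Set ℕ+) (m : ℕ) (R : Finset ℕ)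
    (hA : ∀ a ∈ A, (a : ℕ) % m ∈ R) : upperDensity A ≤ #R / m :=
  upperDensity_le_of_card_le A #R m (card_le_of_mod_mem A m R hA)

section AffinePlane

variable {F : Type*} [Field F]

open Classical in
/-- The direction of the line through `P` and `Q`: `none` if it is vertical (in particular if
`P = Q`), `some s` if it has slope `s`. -/
noncomputable def direction (P Q : F × F) : Option F :=
  if P.1 = Q.1 then none else some ((Q.2 - P.2) / (Q.1 - P.1))

/-- The lines of direction `d` are the level sets of `intercept d`. -/
def intercept : Option F → F × F → F
  | none, P => P.1
  | some s, P => P.2 - s * P.1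

lemma direction_comm (P Q : F × F) : direction P Q = direction Q P := by
  unfold direction
  by_cases h : P.1 = Q.1
  · simp [h]
  · rw [if_neg h, if_neg (Ne.symm h), ← neg_sub P.2, ← neg_sub P.1, neg_div_neg_eq]

lemma intercept_direction (P Q : F × F) :
    intercept (direction P Q) P = intercept (direction P Q) Q := by
  unfold direction
  by_cases h : P.1 = Q.1
  · simp [intercept, h]
  · have h' : Q.1 - P.1 ≠ 0 := sub_ne_zero.2 (Ne.symm h)
    simp only [if_neg h, intercept]
    field_simp
    ring

lemma card_filter_intercept_eq [Fintype F] [DecidableEq F] (d : Option F) (t : F) :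
    #{P : F × F | intercept d P = t} = Fintype.card F := by
  rw [← Fintype.card_subtype]
  cases d with
  | none =>
    refine Fintype.card_congr ⟨fun P => P.1.2, fun y => ⟨(t, y), rfl⟩, ?_, fun _ => rfl⟩
    rintro ⟨⟨x, y⟩, rfl : x = t⟩
    rfl
  | some s =>
    refine Fintype.card_congr
      ⟨fun P => P.1.1, fun x => ⟨(x, t + s * x), by simp [intercept]⟩, ?_, fun _ => rfl⟩
    rintro ⟨⟨x, y⟩, h : y - s * x = t⟩
    ext
    · rfl
    · show t + s * x = y
      linear_combination -h

end AffinePlane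

lemma IsMonoPath.exists_forall_eq {k : ℕ} {Adj : ℕ+ → ℕ+ → Prop} {c : Sym2 ℕ+ → Fin k}
    {i : Fin k} {P : Set ℕ+} (hP : IsMonoPath Adj c i P) {α : Type*} [Nonempty α]
    (φ : ℕ+ → α) (hφ : ∀ x y, c s(x, y) = i → φ x = φ y) : ∃ t, ∀ v ∈ P, φ v = t := by
  rcases hP with ⟨_ | n, f, -, hpath, rfl⟩ | ⟨f, -, hpath, rfl⟩
  · exact ⟨Classical.arbitrary α, fun v ⟨j, _⟩ => j.elim0⟩
  · refine ⟨φ (f 0), Set.forall_mem_range.2 fun j => ?_⟩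
    induction j using Fin.induction with
    | zero => rfl
    | succ j ih => exact (hφ _ _ (hpath j j.succ.isLt).2).symm.trans ih
  · refine ⟨φ (f 0), Set.forall_mem_range.2 fun j => ?_⟩
    induction j with
    | zero => rfl
    | succ j ih => exact (hφ _ _ (hpath j).2).symm.trans ih

theorem exists_colouring_upperDensity_monoPath_le (F : Type*) [Field F] [Fintype F] (k : ℕ)
    (hk : Fintype.card F + 1 ≤ k) (Adj : ℕ+ → ℕ+ → Prop) :
    ∃ c : Sym2 ℕ+ → Fin k, ∀ (i : Fin k) (P : Set ℕ+),
      IsMonoPath Adj c i P → upperDensity P ≤ 1 / Fintype.card F := by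
  classical
  set m := Fintype.card (F × F)
  let e : Fin m ≃ F × F := (Fintype.equivFin (F × F)).symm
  let pt : ℕ+ → F × F := fun a => e ⟨a % m, Nat.mod_lt _ Fintype.card_pos⟩
  obtain ⟨ι⟩ : Nonempty (Option F ↪ Fin k) :=
    Function.Embedding.nonempty_of_card_le (by simpa using hk)
  refine ⟨Sym2.lift ⟨fun x y => ι (direction (pt x) (pt y)),
    fun x y => by simp only [direction_comm]⟩, fun i P hP => ?_⟩
  -- if `i` is not in the range of `ι`, no edge has colour `i` and `d` is irrelevant
  set d := Function.invFun ι i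
  obtain ⟨t, ht⟩ := hP.exists_forall_eq (fun v => intercept d (pt v))
    fun x y (hxy : ι (direction (pt x) (pt y)) = i) => by
      have hd : d = direction (pt x) (pt y) := by
        simp only [d, ← hxy, Function.leftInverse_invFun ι.injective _]
      rw [hd]
      exact intercept_direction (pt x) (pt y)
  let R : Finset ℕ :=
    ({Q : F × F | intercept d Q = t} : Finset _).image fun Q => (e.symm Q : ℕ)
  have hR : #R = Fintype.card F := by
    rw [card_image_of_injective _ fun _ _ h => e.symm.injective (Fin.ext h)]
    convert card_filter_intercept_eq d t
  have hm : (m : ℝ) = Fintype.card F * Fintype.card F := by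
    simp [m, Fintype.card_prod]
  calc upperDensity P ≤ #R / m :=
        upperDensity_le_of_mod_mem P m R fun a ha =>
          mem_image.2 ⟨pt a, by simpa using ht a ha, by simp [pt]⟩
    _ = 1 / Fintype.card F := by
        rw [hR, hm]
        field_simp

theorem stmt_2_general (k q : ℕ) (hq : IsPrimePow q) (hqk : q ≤ k - 1) :
    ∃ c : Sym2 ℕ+ → Fin k, ∀ (i : Fin k) (P : Set ℕ+),
      IsMonoPath completeAdj c i P → upperDensity P ≤ 1 / q := by
  obtain ⟨p, n, hp, hn, rfl⟩ := hq
  have hp : p.Prime := Nat.prime_iff.2 hp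
  have : Fact p.Prime := ⟨hp⟩
  let : Fintype (GaloisField p n) := Fintype.ofFinite _
  have hcard : Fintype.card (GaloisField p n) = p ^ n := by
    rw [Fintype.card_eq_nat_card, GaloisField.card p n hn.ne']
  have hq_pos : 0 < p ^ n := pow_pos hp.pos n
  rw [← hcard] at hqk ⊢
  exact exists_colouring_upperDensity_monoPath_le _ k (by omega) completeAdj

/-- For `k ≥ 3` and a prime power `q ≤ k - 1`, there is a `k`-edge-colouring of
`K_ℕ` in which every monochromatic path has upper density at most `1/q`. -/
theorem stmt_2 (k q : ℕ) (hk : 3 ≤ k) (hq : IsPrimePow q) (hqk : q ≤ k - 1) :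
    ∃ c : Sym2 ℕ+ → Fin k, ∀ (i : Fin k) (P : Set ℕ+),
      IsMonoPath completeAdj c i P → upperDensity P ≤ 1 / q :=
  stmt_2_general k q hq hqk
end

section
/- Let V and W be infinite disjoint sets with V ∪ W = ℕ, and let K_{V,W} be the complete bipartite graph with parts V and W. For every k ∈ ℕ, there exists a k-edge-colouring of K_{V,W} in which every monochromatic path P satisfies d̄(P) ≤ 1/k. -/
open Filter

/-! The vertices of each part are coloured by their rank in that part modulo `k`, and the edge
`vw` gets the sum of the colours of its ends. Along a monochromatic path of colour `i` the
colours of consecutive vertices add up to `i`, so all vertices of the path in `V` have one rank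
class `α` and all those in `W` have the class `i - α`. Each rank class contains every `k`-th
element of its part, so the path has at most `n / k + 2` vertices up to `n`. -/

-- `(m : Fin k)` is `m` reduced modulo `k`.
open Fin.NatCast

/-- For `x ∈ A`, `countLE A x` is the rank of `x` in `A`. -/
noncomputable def countLE (A : Set ℕ+) (n : ℕ) : ℕ := {a : ℕ+ | a ∈ A ∧ (a : ℕ) ≤ n}.ncard

lemma finite_setOf_coe_le (n : ℕ) : {a : ℕ+ | (a : ℕ) ≤ n}.Finite :=
  (Set.finite_Iic n).preimage PNat.coe_injective.injOn

lemma finite_setOf_mem_coe_le (A : Set ℕ+) (n : ℕ) : {a : ℕ+ | a ∈ A ∧ (a : ℕ) ≤ n}.Finite :=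
  (finite_setOf_coe_le n).subset fun _ ha => ha.2

lemma ncard_setOf_coe_le (n : ℕ) : {a : ℕ+ | (a : ℕ) ≤ n}.ncard ≤ n := by
  rw [← Set.ncard_image_of_injective _ PNat.coe_injective]
  calc _ ≤ (Finset.Icc 1 n : Set ℕ).ncard := by
        refine Set.ncard_le_ncard ?_ (Finset.finite_toSet _)
        rintro _ ⟨a, ha, rfl⟩
        exact Finset.mem_coe.2 (Finset.mem_Icc.2 ⟨a.pos, ha⟩)
    _ = n := by rw [Set.ncard_coe_finset, Nat.card_Icc, Nat.add_sub_cancel]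

lemma countLE_mono_set {A B : Set ℕ+} (h : A ⊆ B) (n : ℕ) : countLE A n ≤ countLE B n :=
  Set.ncard_le_ncard (fun _ ha => ⟨h ha.1, ha.2⟩) (finite_setOf_mem_coe_le B n)

lemma countLE_mono (A : Set ℕ+) : Monotone (countLE A) := fun _ n h =>
  Set.ncard_le_ncard (fun _ ha => ⟨ha.1, ha.2.trans h⟩) (finite_setOf_mem_coe_le A n)

lemma countLE_union_le (A B : Set ℕ+) (n : ℕ) : countLE (A ∪ B) n ≤ countLE A n + countLE B n :=
  calc countLE (A ∪ B) n
      = ({a : ℕ+ | a ∈ A ∧ (a : ℕ) ≤ n} ∪ {a : ℕ+ | a ∈ B ∧ (a : ℕ) ≤ n}).ncard := by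
        rw [countLE]; congr 1; ext; exact or_and_right
    _ ≤ countLE A n + countLE B n := Set.ncard_union_le _ _

lemma countLE_add_countLE_le {A B : Set ℕ+} (h : Disjoint A B) (n : ℕ) :
    countLE A n + countLE B n ≤ n :=
  calc countLE A n + countLE B n
      = ({a : ℕ+ | a ∈ A ∧ (a : ℕ) ≤ n} ∪ {a : ℕ+ | a ∈ B ∧ (a : ℕ) ≤ n}).ncard :=
        (Set.ncard_union_eq (Set.disjoint_left.2 fun _ ha hb => h.notMem_of_mem_left ha.1 hb.1)
          (finite_setOf_mem_coe_le A n) (finite_setOf_mem_coe_le B n)).symm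
    _ ≤ {a : ℕ+ | (a : ℕ) ≤ n}.ncard :=
        Set.ncard_le_ncard (by rintro a (ha | ha) <;> exact ha.2) (finite_setOf_coe_le n)
    _ ≤ n := ncard_setOf_coe_le n

lemma countLE_le_of_finite {A : Set ℕ+} (hA : A.Finite) (n : ℕ) : countLE A n ≤ A.ncard :=
  Set.ncard_le_ncard (fun _ ha => ha.1) hA

lemma countLE_lt_countLE {A : Set ℕ+} {x y : ℕ+} (hy : y ∈ A) (hxy : x < y) :
    countLE A x < countLE A y := by
  refine Set.ncard_lt_ncard ⟨fun z hz => ⟨hz.1, hz.2.trans ((PNat.coe_le_coe x y).2 hxy.le)⟩,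
    fun hsub => ?_⟩ (finite_setOf_mem_coe_le A y)
  exact (hsub ⟨hy, le_rfl⟩).2.not_gt hxy

lemma injOn_countLE (A : Set ℕ+) : Set.InjOn (fun x : ℕ+ => countLE A x) A := by
  intro x hx y hy hxy
  by_contra hne
  rcases lt_or_gt_of_ne hne with h | h
  · exact (countLE_lt_countLE hy h).ne hxy
  · exact (countLE_lt_countLE hx h).ne' hxy

def rankClass {k : ℕ} [NeZero k] (A : Set ℕ+) (α : Fin k) : Set ℕ+ :=
  {x | x ∈ A ∧ (countLE A x : Fin k) = α}

lemma countLE_rankClass_le {k : ℕ} [NeZero k] (A : Set ℕ+) (α : Fin k) (n : ℕ) :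
    countLE (rankClass A α) n ≤ countLE A n / k + 1 := by
  have hval : ∀ x ∈ rankClass A α, countLE A x % k = α := fun x hx => by
    rw [← Fin.val_natCast, hx.2]
  calc countLE (rankClass A α) n ≤ (Set.Iic (countLE A n / k)).ncard := by
        refine Set.ncard_le_ncard_of_injOn (fun x : ℕ+ => countLE A x / k) ?_ ?_ (Set.finite_Iic _)
        · exact fun x hx => Nat.div_le_div_right (countLE_mono A hx.2)
        · intro x hx y hy (hxy : countLE A x / k = countLE A y / k)
          refine injOn_countLE A hx.1.1 hy.1.1 (show countLE A x = countLE A y from ?_)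
          rw [← Nat.div_add_mod (countLE A x) k, ← Nat.div_add_mod (countLE A y) k, hxy,
            hval x hx.1, hval y hy.1]
    _ = countLE A n / k + 1 := by
        rw [← Finset.coe_Iic, Set.ncard_coe_finset, Nat.card_Iic]

lemma upperDensity_le_of_countLE_le {P : Set ℕ+} {c C : ℝ}
    (h : ∀ n, (countLE P n : ℝ) ≤ c * n + C) : upperDensity P ≤ c := by
  have hlim : Tendsto (fun n : ℕ => c + C / n) atTop (nhds c) := by
    simpa using tendsto_const_nhds.add (tendsto_const_div_atTop_nhds_zero_nat C)
  have hle : (fun n : ℕ => (countLE P n : ℝ) / n) ≤ᶠ[atTop] fun n : ℕ => c + C / n := by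
    filter_upwards [eventually_gt_atTop 0] with n hn
    have hn' : (0 : ℝ) < n := Nat.cast_pos.2 hn
    rw [div_le_iff₀ hn', add_mul, div_mul_cancel₀ _ hn'.ne']
    linarith [h n]
  calc upperDensity P ≤ limsup (fun n : ℕ => c + C / n) atTop :=
        limsup_le_limsup hle (isCoboundedUnder_le_of_le _ fun _ => by positivity)
          hlim.isBoundedUnder_le
    _ = c := hlim.limsup_eq

lemma upperDensity_nonpos_of_finite {P : Set ℕ+} (hP : P.Finite) : upperDensity P ≤ 0 :=
  upperDensity_le_of_countLE_le (C := P.ncard) fun n => by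
    simpa using countLE_le_of_finite hP n

lemma upperDensity_le_of_subset_rankClass_union {k : ℕ} [NeZero k] {A B P : Set ℕ+}
    (hAB : Disjoint A B) {α β : Fin k} (hP : P ⊆ rankClass A α ∪ rankClass B β) :
    upperDensity P ≤ 1 / k := by
  refine upperDensity_le_of_countLE_le (C := 2) fun n => ?_
  have hk : (0 : ℝ) < k := Nat.cast_pos.2 (Nat.pos_of_neZero k)
  have hA : ((countLE A n / k : ℕ) : ℝ) ≤ countLE A n / k := Nat.cast_div_le
  have hB : ((countLE B n / k : ℕ) : ℝ) ≤ countLE B n / k := Nat.cast_div_le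
  have hsum : (countLE A n : ℝ) + countLE B n ≤ n := by
    exact_mod_cast countLE_add_countLE_le hAB n
  have hP : countLE P n ≤ (countLE A n / k + 1) + (countLE B n / k + 1) :=
    (countLE_mono_set hP n).trans <| (countLE_union_le _ _ n).trans <|
      add_le_add (countLE_rankClass_le A α n) (countLE_rankClass_le B β n)
  calc (countLE P n : ℝ)
        ≤ ((countLE A n / k : ℕ) : ℝ) + 1 + (((countLE B n / k : ℕ) : ℝ) + 1) := by
          exact_mod_cast hP
    _ ≤ (countLE A n + countLE B n) / k + 2 := by rw [add_div]; linarith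
    _ ≤ 1 / k * n + 2 := by rw [one_div_mul_eq_div]; gcongr

noncomputable def partRank (V W : Set ℕ+) (x : ℕ+) : ℕ := by
  classical exact if x ∈ V then countLE V x else countLE W x

noncomputable def rankSumColouring (V W : Set ℕ+) (k : ℕ) [NeZero k] : Sym2 ℕ+ → Fin k :=
  Sym2.lift ⟨fun x y => (partRank V W x : Fin k) + partRank V W y, fun _ _ => add_comm _ _⟩

section Colouring

variable {V W : Set ℕ+} {k : ℕ} [NeZero k]

lemma rankSumColouring_of_mem {v w : ℕ+} (hdisj : Disjoint V W) (hv : v ∈ V) (hw : w ∈ W) :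
    rankSumColouring V W k s(v, w) = (countLE V v : Fin k) + countLE W w := by
  simp [rankSumColouring, partRank, hv, hdisj.notMem_of_mem_right hw]

lemma mem_rankClass_union_of_adj (hdisj : Disjoint V W) {i α : Fin k} {x y : ℕ+}
    (hxy : bipAdj V W x y) (hc : rankSumColouring V W k s(x, y) = i)
    (hx : x ∈ rankClass V α ∪ rankClass W (i - α)) :
    y ∈ rankClass V α ∪ rankClass W (i - α) := by
  rcases hx with hx | hx
  · have hy : y ∈ W := (hxy.resolve_right fun h => hdisj.notMem_of_mem_left hx.1 h.1).2
    rw [rankSumColouring_of_mem hdisj hx.1 hy, hx.2] at hc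
    exact Or.inr ⟨hy, eq_sub_of_add_eq' hc⟩
  · have hy : y ∈ V := (hxy.resolve_left fun h => hdisj.notMem_of_mem_left h.1 hx.1).2
    rw [Sym2.eq_swap, rankSumColouring_of_mem hdisj hy hx.1, hx.2] at hc
    exact Or.inl ⟨hy, (eq_sub_of_add_eq hc).trans (sub_sub_cancel i α)⟩

lemma range_subset_rankClass_union (hdisj : Disjoint V W) {i : Fin k} {f : ℕ → ℕ+}
    (hf : ∀ j, bipAdj V W (f j) (f (j + 1)) ∧ rankSumColouring V W k s(f j, f (j + 1)) = i) :
    ∃ α : Fin k, Set.range f ⊆ rankClass V α ∪ rankClass W (i - α) := by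
  obtain ⟨α, h0⟩ : ∃ α : Fin k, f 0 ∈ rankClass V α ∪ rankClass W (i - α) := by
    rcases (hf 0).1 with ⟨h, -⟩ | ⟨h, -⟩
    · exact ⟨_, Or.inl ⟨h, rfl⟩⟩
    · exact ⟨i - (countLE W (f 0) : Fin k), Or.inr ⟨h, by abel⟩⟩
  refine ⟨α, Set.range_subset_iff.2 fun j => ?_⟩
  induction j with
  | zero => exact h0
  | succ j ih => exact mem_rankClass_union_of_adj hdisj (hf j).1 (hf j).2 ih

end Colouring

theorem stmt_3_general (V W : Set ℕ+)
    (hdisj : Disjoint V W) (k : ℕ) (hk : 0 < k) :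
    ∃ c : Sym2 ℕ+ → Fin k, ∀ (i : Fin k) (P : Set ℕ+),
      IsMonoPath (bipAdj V W) c i P → upperDensity P ≤ 1 / k := by
  have : NeZero k := ⟨hk.ne'⟩
  refine ⟨rankSumColouring V W k, fun i P hP => ?_⟩
  rcases hP with ⟨n, f, -, -, rfl⟩ | ⟨f, -, hf, rfl⟩
  · exact (upperDensity_nonpos_of_finite (Set.finite_range f)).trans (by positivity)
  · obtain ⟨α, hα⟩ := range_subset_rankClass_union hdisj hf
    exact upperDensity_le_of_subset_rankClass_union hdisj hα

/-- For every `k ≥ 1`, there is a `k`-edge-colouring of `K_{V,W}` in which every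
monochromatic path has upper density at most `1/k`. -/
theorem stmt_3 (V W : Set ℕ+) (hV : V.Infinite) (hW : W.Infinite)
    (hdisj : Disjoint V W) (hunion : V ∪ W = Set.univ) (k : ℕ) (hk : 0 < k) :
    ∃ c : Sym2 ℕ+ → Fin k, ∀ (i : Fin k) (P : Set ℕ+),
      IsMonoPath (bipAdj V W) c i P → upperDensity P ≤ 1 / k :=
  stmt_3_general V W hdisj k hk
end

section
/- Let V and W be infinite disjoint sets with V ∪ W = ℕ, let the complete bipartite graph K_{V,W} be k-edge-coloured, and let i₀ ∈ {1,…,k}. Let V' ⊆ V and W' ⊆ W be infinite, let 𝒱' and 𝒲' be nonprincipal ultrafilters on V' and W' respectively, and set V_{i₀} = {v ∈ V : N_{i₀}(v) ∩ W' ∈ 𝒲'}. Then there exists a monochromatic path of colour i₀ whose vertex set contains V_{i₀}. -/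
open Filter

/-- Colour-`i` neighbourhood of `v` in the graph with adjacency `Adj` and
edge-colouring `c`. -/
def nbhd {k : ℕ} (Adj : ℕ+ → ℕ+ → Prop) (c : Sym2 ℕ+ → Fin k) (i : Fin k)
    (v : ℕ+) : Set ℕ+ :=
  {x | Adj v x ∧ c s(v, x) = i}

/-- `U` is an ultrafilter on the set `X`: a family of subsets of `X` closed
under finite intersections and supersets (within `X`), not containing `∅`,
and containing `Y` or `X \ Y` for every `Y ⊆ X`. -/
def IsUltrafilterOn (X : Set ℕ+) (U : Set (Set ℕ+)) : Prop :=
  (∀ A ∈ U, A ⊆ X) ∧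
  (∀ A ∈ U, ∀ B ∈ U, A ∩ B ∈ U) ∧
  (∀ A ∈ U, ∀ B, A ⊆ B → B ⊆ X → B ∈ U) ∧
  ∅ ∉ U ∧
  (∀ Y, Y ⊆ X → (Y ∈ U ∨ X \ Y ∈ U))

/-- An ultrafilter is nonprincipal if it contains no finite set. -/
def NonprincipalOn (U : Set (Set ℕ+)) : Prop := ∀ A ∈ U, ¬ A.Finite


/-!
Any two vertices `s, t` of `V_{i₀}` have infinitely many common colour-`i₀` neighbours, since
`N_{i₀}(s) ∩ N_{i₀}(t) ∩ W'` lies in the nonprincipal ultrafilter `𝒲'`; these neighbours lie in `W`,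
so outside `V_{i₀}`. Enumerate `V_{i₀} = {s₀, s₁, …}` and choose pairwise distinct common
neighbours `wⱼ` of `sⱼ` and `sⱼ₊₁`; then `s₀ w₀ s₁ w₁ s₂ …` is the required path.
-/

open Set Function

theorem Stream'.injOn_get_interleave {α : Type*} {e w : Stream' α} {I : Set ℕ}
    (he : InjOn e.get {t | 2 * t ∈ I}) (hw : InjOn w.get {t | 2 * t + 1 ∈ I})
    (hew : ∀ a b, e.get a ≠ w.get b) : InjOn (e ⋈ w).get I := by
  intro a ha b hb h
  obtain ⟨s, rfl | rfl⟩ := Nat.even_or_odd' a <;> obtain ⟨t, rfl | rfl⟩ := Nat.even_or_odd' b <;>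
    simp only [Stream'.get_interleave_left, Stream'.get_interleave_right] at h
  · rw [he ha hb h]
  · exact absurd h (hew s t)
  · exact absurd h.symm (hew t s)
  · rw [hw ha hb h]

theorem exists_injective_forall_mem {α : Type*} [Countable α] {T : ℕ → Set α}
    (hT : ∀ j, (T j).Infinite) :
    ∃ w : ℕ → α, Injective w ∧ ∀ j, w j ∈ T j := by
  obtain ⟨g, hg⟩ := exists_injective_nat α
  have hfreq (j : ℕ) : ∃ᶠ n in Filter.atTop, ∃ x ∈ T j, g x = n :=
    Nat.frequently_atTop_iff_infinite.2 ((hT j).image hg.injOn)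
  -- choosing `w j` with strictly increasing codes `g (w j)` makes the choices distinct
  obtain ⟨φ, hφ, hφT⟩ := Filter.extraction_forall_of_frequently hfreq
  choose w hwT hgw using hφT
  refine ⟨w, fun a b hab => hφ.injective ?_, hwT⟩
  rw [← hgw a, ← hgw b, hab]

section MonoPath

variable {k : ℕ} {Adj : ℕ+ → ℕ+ → Prop} {c : Sym2 ℕ+ → Fin k} {i : Fin k}

def IsMonoEdge (Adj : ℕ+ → ℕ+ → Prop) (c : Sym2 ℕ+ → Fin k) (i : Fin k) (x y : ℕ+) : Prop :=
  Adj x y ∧ c s(x, y) = i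

theorem IsMonoEdge.symm [Std.Symm Adj] {x y : ℕ+} (h : IsMonoEdge Adj c i x y) :
    IsMonoEdge Adj c i y x :=
  ⟨Std.Symm.symm x y h.1, Sym2.eq_swap ▸ h.2⟩

def InfiniteCommonNbhds (Adj : ℕ+ → ℕ+ → Prop) (c : Sym2 ℕ+ → Fin k) (i : Fin k) (S : Set ℕ+) :
    Prop :=
  ∀ s ∈ S, ∀ t ∈ S, ((nbhd Adj c i s ∩ nbhd Adj c i t) \ S).Infinite

theorem isMonoPath_image_Iio {f : ℕ → ℕ+} {n : ℕ} (hf : InjOn f (Iio n))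
    (hwalk : ∀ j, j + 1 < n → IsMonoEdge Adj c i (f j) (f (j + 1))) :
    IsMonoPath Adj c i (f '' Iio n) := by
  refine Or.inl ⟨n, fun j => f j, fun a b h => Fin.ext (hf a.2 b.2 h), hwalk, ?_⟩
  ext x
  simp [Fin.exists_iff]

theorem exists_connectors [Std.Symm Adj] {S : Set ℕ+}
    (hS : InfiniteCommonNbhds Adj c i S)
    {s : Stream' ℕ+} (hs : ∀ t, s.get t ∈ S) :
    ∃ w : Stream' ℕ+, Injective w.get ∧ (∀ a b, s.get a ≠ w.get b) ∧
      ∀ j, IsMonoEdge Adj c i ((s ⋈ w).get j) ((s ⋈ w).get (j + 1)) := by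
  obtain ⟨w, hw, hwT⟩ : ∃ w : Stream' ℕ+, Injective w.get ∧
      ∀ t, w.get t ∈ (nbhd Adj c i (s.get t) ∩ nbhd Adj c i (s.get (t + 1))) \ S :=
    exists_injective_forall_mem fun t => hS _ (hs t) _ (hs (t + 1))
  refine ⟨w, hw, fun a b h => (hwT b).2 (h ▸ hs a), fun j => ?_⟩
  obtain ⟨t, rfl | rfl⟩ := Nat.even_or_odd' j
  · rw [Stream'.get_interleave_left, Stream'.get_interleave_right]
    exact (hwT t).1.1
  · rw [show 2 * t + 1 + 1 = 2 * (t + 1) by ring, Stream'.get_interleave_left,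
      Stream'.get_interleave_right]
    exact IsMonoEdge.symm (hwT t).1.2

theorem exists_isMonoPath_superset_of_finite [Std.Symm Adj] {S : Set ℕ+}
    (hS : InfiniteCommonNbhds Adj c i S) (hfin : S.Finite) :
    ∃ P, IsMonoPath Adj c i P ∧ S ⊆ P := by
  obtain ⟨m, g, hg, rfl⟩ := hfin.fin_param
  rcases m.eq_zero_or_pos with rfl | hm
  · exact ⟨_, isMonoPath_image_Iio (f := fun _ => 1) (n := 0) (by simp) (by simp),
      fun _ ⟨t, _⟩ => t.elim0⟩
  -- periodic, so that every term lies in `S`; only `s₀, …, s_{m-1}` enter the path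
  let s : Stream' ℕ+ := fun t => g ⟨t % m, Nat.mod_lt t hm⟩
  have hs_lt {t : ℕ} (ht : t < m) : s.get t = g ⟨t, ht⟩ := by
    simp [Stream'.get, s, Nat.mod_eq_of_lt ht]
  obtain ⟨w, hw, hsw, hwalk⟩ := exists_connectors hS (s := s) fun t => mem_range_self _
  have hs_inj : InjOn s.get {t | 2 * t ∈ Iio (2 * m - 1)} := by
    intro a ha b hb h
    simp only [mem_ofPred_eq, mem_Iio] at ha hb
    rw [hs_lt (by omega), hs_lt (by omega)] at h
    exact Fin.mk.inj_iff.1 (hg h)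
  refine ⟨_, isMonoPath_image_Iio (Stream'.injOn_get_interleave hs_inj hw.injOn hsw)
    fun j _ => hwalk j, ?_⟩
  rintro _ ⟨⟨t, ht⟩, rfl⟩
  exact ⟨2 * t, by simp only [mem_Iio]; omega, by rw [Stream'.get_interleave_left, hs_lt ht]⟩

theorem exists_isMonoPath_superset_of_infinite [Std.Symm Adj] {S : Set ℕ+}
    (hS : InfiniteCommonNbhds Adj c i S) (hinf : S.Infinite) :
    ∃ P, IsMonoPath Adj c i P ∧ S ⊆ P := by
  have := hinf.to_subtype
  obtain ⟨enum⟩ : Nonempty (ℕ ≃ S) := nonempty_equiv_of_countable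
  let s : Stream' ℕ+ := fun t => enum t
  obtain ⟨w, hw, hsw, hwalk⟩ := exists_connectors hS (s := s) fun t => (enum t).2
  have hs_inj : Injective s.get := Subtype.val_injective.comp enum.injective
  refine ⟨_, Or.inr ⟨_, injOn_univ.1 (Stream'.injOn_get_interleave hs_inj.injOn hw.injOn hsw),
    hwalk, rfl⟩, fun x hx => ⟨2 * enum.symm ⟨x, hx⟩, ?_⟩⟩
  rw [Stream'.get_interleave_left]
  exact congrArg Subtype.val (enum.apply_symm_apply ⟨x, hx⟩)

theorem exists_isMonoPath_superset [Std.Symm Adj] {S : Set ℕ+}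
    (hS : InfiniteCommonNbhds Adj c i S) :
    ∃ P, IsMonoPath Adj c i P ∧ S ⊆ P :=
  S.finite_or_infinite.elim (exists_isMonoPath_superset_of_finite hS)
    (exists_isMonoPath_superset_of_infinite hS)

end MonoPath

instance (V W : Set ℕ+) : Std.Symm (bipAdj V W) :=
  ⟨fun _ _ h => h.symm.imp And.symm And.symm⟩

theorem mem_of_mem_nbhd_bipAdj {V W : Set ℕ+} (hdisj : Disjoint V W) {k : ℕ}
    {c : Sym2 ℕ+ → Fin k} {i : Fin k} {v x : ℕ+} (hv : v ∈ V)
    (hx : x ∈ nbhd (bipAdj V W) c i v) : x ∈ W :=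
  hx.1.elim And.right fun h => absurd h.1 (hdisj.notMem_of_mem_left hv)

theorem stmt_9_general (V W : Set ℕ+)
    (hdisj : Disjoint V W)
    (k : ℕ) (c : Sym2 ℕ+ → Fin k) (i₀ : Fin k)
    (W' : Set ℕ+)
    (𝒲 : Set (Set ℕ+))
    (h𝒲 : IsUltrafilterOn W' 𝒲) (h𝒲np : NonprincipalOn 𝒲) :
    ∃ P : Set ℕ+, IsMonoPath (bipAdj V W) c i₀ P ∧
      {v | v ∈ V ∧ nbhd (bipAdj V W) c i₀ v ∩ W' ∈ 𝒲} ⊆ P := by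
  refine exists_isMonoPath_superset fun s hs t ht => ?_
  have hcommon := h𝒲np _ (h𝒲.2.1 _ hs.2 _ ht.2)
  refine Set.Infinite.mono ?_ hcommon
  rintro x ⟨⟨hxs, -⟩, hxt, -⟩
  have hxW := mem_of_mem_nbhd_bipAdj hdisj hs.1 hxs
  exact ⟨⟨hxs, hxt⟩, fun hx => hdisj.notMem_of_mem_left hx.1 hxW⟩

/-- Lemma 3.1 (first part): there is a path of colour `i₀` containing
`V_{i₀} = {v ∈ V : N_{i₀}(v) ∩ W' ∈ 𝒲'}`. -/
theorem stmt_9 (V W : Set ℕ+) (hV : V.Infinite) (hW : W.Infinite)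
    (hdisj : Disjoint V W) (hunion : V ∪ W = Set.univ)
    (k : ℕ) (c : Sym2 ℕ+ → Fin k) (i₀ : Fin k)
    (V' W' : Set ℕ+) (hV'sub : V' ⊆ V) (hW'sub : W' ⊆ W)
    (hV'inf : V'.Infinite) (hW'inf : W'.Infinite)
    (𝒱 𝒲 : Set (Set ℕ+))
    (h𝒱 : IsUltrafilterOn V' 𝒱) (h𝒱np : NonprincipalOn 𝒱)
    (h𝒲 : IsUltrafilterOn W' 𝒲) (h𝒲np : NonprincipalOn 𝒲) :
    ∃ P : Set ℕ+, IsMonoPath (bipAdj V W) c i₀ P ∧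
      {v | v ∈ V ∧ nbhd (bipAdj V W) c i₀ v ∩ W' ∈ 𝒲} ⊆ P :=
  stmt_9_general V W hdisj k c i₀ W' 𝒲 h𝒲 h𝒲np
end

section
/- Let V and W be infinite disjoint sets with V ∪ W = ℕ, let the complete bipartite graph K_{V,W} be k-edge-coloured, and let i₀ ∈ {1,…,k}. Let V' ⊆ V and W' ⊆ W be infinite, let 𝒱' and 𝒲' be nonprincipal ultrafilters on V' and W' respectively, and set V_{i₀} = {v ∈ V : N_{i₀}(v) ∩ W' ∈ 𝒲'} and W_{i₀} = {w ∈ W : N_{i₀}(w) ∩ V' ∈ 𝒱'}. Let U*_{i₀} be the set of vertices v ∈ V_{i₀} ∪ W_{i₀} such that N_{i₀}(v) ∩ (V_{i₀} ∪ W_{i₀}) is infinite. If U*_{i₀} is infinite, then there exists a monochromatic path of colour i₀ whose vertex set contains V_{i₀} ∪ W_{i₀}. -/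
open Filter

/-!
Inside the colour-`i₀` graph, any two vertices of `V_{i₀}` have infinitely many common
neighbours (the intersection of their neighbourhoods in `W'` lies in `𝒲'`, which contains no
finite set), and likewise for `W_{i₀}`. Say `U*_{i₀} ∩ V_{i₀}` is infinite; its vertices are
anchors: each has infinitely many neighbours in `W_{i₀}`. A path ending at an anchor can be
prolonged through any prescribed vertex of `V_{i₀} ∪ W_{i₀}` to a new anchor, using only fresh
vertices: two vertices on the same side are joined through a fresh common neighbour, and the
anchors give the passage between the sides. Prolonging successively through an enumeration
of `V_{i₀} ∪ W_{i₀}` yields the path as a limit of finite ones.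
-/

variable {α : Type*} {R : α → α → Prop}

theorem List.IsChain.append_of_getLast?_eq {L M : List α} {z : α} (hL : L.IsChain R)
    (hz : L.getLast? = some z) (hM : (z :: M).IsChain R) : (L ++ M).IsChain R :=
  hL.append hM.tail fun x hx y hy => by
    obtain rfl : z = x := by simpa [hz] using hx
    exact (List.isChain_cons.1 hM).1 y hy

/-- `M` lists the vertices of an `R`-path from `z` to `z'` after its start `z`; only these must
avoid `T`. -/
def IsFreshPath (R : α → α → Prop) (T : Finset α) (z : α) (M : List α) (z' : α) : Prop :=
  (z :: M).IsChain R ∧ M.Nodup ∧ (∀ x ∈ M, x ∉ T) ∧ M.getLast? = some z'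

namespace IsFreshPath

variable {T T' : Finset α} {z w y z' : α} {L M M₁ M₂ : List α}

theorem mem_of_getLast (h : IsFreshPath R T z M z') : z' ∈ M :=
  List.mem_of_getLast? h.2.2.2

theorem ne_nil (h : IsFreshPath R T z M z') : M ≠ [] :=
  List.ne_nil_of_mem h.mem_of_getLast

theorem single (hzw : R z w) (hw : w ∉ T) : IsFreshPath R T z [w] w :=
  ⟨by simpa using hzw, List.nodup_singleton w, by simpa using hw, rfl⟩

theorem mono (h : IsFreshPath R T' z M z') (hT : T ⊆ T') : IsFreshPath R T z M z' :=
  ⟨h.1, h.2.1, fun x hx hxT => h.2.2.1 x hx (hT hxT), h.2.2.2⟩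

theorem append [DecidableEq α] (h₁ : IsFreshPath R T z M₁ y) (h₂ : IsFreshPath R (T ∪ M₁.toFinset) y M₂ z') :
    IsFreshPath R T z (M₁ ++ M₂) z' := by
  refine ⟨?_, ?_, ?_, ?_⟩
  · rw [← List.cons_append]
    exact h₁.1.append_of_getLast?_eq (by rw [List.getLast?_cons, h₁.2.2.2]; rfl) h₂.1
  · refine List.nodup_append.2 ⟨h₁.2.1, h₂.2.1, ?_⟩
    rintro x hx _ hx' rfl
    exact h₂.2.2.1 x hx' (Finset.mem_union_right _ (List.mem_toFinset.2 hx))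
  · intro x hx
    rcases List.mem_append.1 hx with hx | hx
    · exact h₁.2.2.1 x hx
    · exact fun hxT => h₂.2.2.1 x hx (Finset.mem_union_left _ hxT)
  · rw [List.getLast?_append_of_ne_nil _ h₂.ne_nil]
    exact h₂.2.2.2

theorem extend [DecidableEq α] (h : IsFreshPath R L.toFinset z M z') (hL : L.IsChain R) (hnd : L.Nodup)
    (hz : L.getLast? = some z) :
    (L ++ M).IsChain R ∧ (L ++ M).Nodup ∧ (L ++ M).getLast? = some z' := by
  refine ⟨hL.append_of_getLast?_eq hz h.1, ?_, ?_⟩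
  · refine List.nodup_append.2 ⟨hnd, h.2.1, ?_⟩
    rintro x hx _ hx' rfl
    exact h.2.2.1 x hx' (List.mem_toFinset.2 hx)
  · rw [List.getLast?_append_of_ne_nil _ h.ne_nil]
    exact h.2.2.2

end IsFreshPath

theorem exists_isFreshPath_of_infinite_inter [DecidableEq α] {T : Finset α} {z y : α} (hR : Std.Symm R)
    (h : ({w | R z w} ∩ {w | R y w}).Infinite) (hy : y ∉ T) : ∃ M, IsFreshPath R T z M y := by
  obtain ⟨w, ⟨hzw, hyw⟩, hw⟩ := h.exists_notMem_finset (insert y T)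
  rw [Finset.mem_insert, not_or] at hw
  exact ⟨[w] ++ [y], (IsFreshPath.single hzw hw.2).append
    (IsFreshPath.single (hR.symm _ _ hyw) (by simp [hy, Ne.symm hw.1]))⟩

theorem infinite_nbrs_inter_right {X Y : Set α} {a : α} (hX : ∀ x ∈ X, ∀ x' ∈ X, ¬R x x')
    (ha : a ∈ X) (h : ({w | R a w} ∩ (X ∪ Y)).Infinite) : ({w | R a w} ∩ Y).Infinite := by
  refine h.mono ?_
  rintro w ⟨hw, hwX | hwY⟩
  · exact absurd hw (hX a ha w hwX)
  · exact ⟨hw, hwY⟩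

theorem exists_getElem_eq_of_isPrefix {F : ℕ → List α} (hpre : ∀ n, F n <+: F (n + 1))
    (hlen : ∀ n, (F n).length < (F (n + 1)).length) :
    ∃ f : ℕ → α, ∀ n j (hj : j < (F n).length), (F n)[j] = f j := by
  have hpre' : ∀ m n, m ≤ n → F m <+: F n := fun m n hmn => by
    induction n, hmn using Nat.le_induction with
    | base => exact List.prefix_refl _
    | succ n _ ih => exact ih.trans (hpre n)
  have hidx : ∀ j, j < (F (j + 1)).length :=
    fun j => Nat.lt_of_lt_of_le (Nat.lt_succ_self j) (strictMono_nat_of_lt_succ hlen).le_apply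
  refine ⟨fun j => (F (j + 1))[j]'(hidx j), fun n j hj => ?_⟩
  rcases le_total n (j + 1) with h | h
  · exact (hpre' _ _ h).getElem hj
  · exact ((hpre' _ _ h).getElem (hidx j)).symm

theorem exists_injective_isChain_of_isPrefix {F : ℕ → List α} (hpre : ∀ n, F n <+: F (n + 1))
    (hlen : ∀ n, (F n).length < (F (n + 1)).length) (hnd : ∀ n, (F n).Nodup)
    (hch : ∀ n, (F n).IsChain R) :
    ∃ f : ℕ → α, Function.Injective f ∧ (∀ j, R (f j) (f (j + 1))) ∧
      ∀ n, ∀ x ∈ F n, x ∈ Set.range f := by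
  obtain ⟨f, hf⟩ := exists_getElem_eq_of_isPrefix hpre hlen
  have hidx : ∀ j n, j < n → j < (F n).length := fun j n hjn =>
    Nat.lt_of_lt_of_le hjn (strictMono_nat_of_lt_succ hlen).le_apply
  refine ⟨f, fun a b hab => ?_, fun j => ?_, fun n x hx => ?_⟩
  · have ha := hidx a (a + b + 1) (by omega)
    have hb := hidx b (a + b + 1) (by omega)
    rw [← hf _ a ha, ← hf _ b hb] at hab
    exact (hnd _).getElem_inj_iff.1 hab
  · have hj := hidx (j + 1) (j + 2) (by omega)
    rw [← hf (j + 2) j (by omega), ← hf (j + 2) (j + 1) hj]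
    exact List.isChain_iff_getElem.1 (hch _) j hj
  · obtain ⟨j, hj, rfl⟩ := List.mem_iff_getElem.1 hx
    exact ⟨j, (hf n j hj).symm⟩

theorem exists_injective_isChain_of_forall_exists_isFreshPath [Countable α] [DecidableEq α]
    {S A : Set α} (hS : S.Nonempty) (hA : A.Nonempty)
    (hext : ∀ z ∈ A, ∀ u ∈ S, ∀ T : Finset α,
      ∃ M z', z' ∈ A ∧ IsFreshPath R T z M z' ∧ (u ∈ T ∨ u ∈ M)) :
    ∃ f : ℕ → α, Function.Injective f ∧ (∀ j, R (f j) (f (j + 1))) ∧ S ⊆ Set.range f := by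
  obtain ⟨a₀, ha₀⟩ := hA
  obtain ⟨e, rfl⟩ := S.to_countable.exists_eq_range hS
  let Good (L : List α) : Prop := L.IsChain R ∧ L.Nodup ∧ ∃ z ∈ A, L.getLast? = some z
  have hstep : ∀ n (L : {L // Good L}), ∃ L' : {L // Good L},
      L.1 <+: L'.1 ∧ L.1.length < L'.1.length ∧ e n ∈ L'.1 := by
    rintro n ⟨L, hch, hnd, z, hzA, hz⟩
    obtain ⟨M, z', hz'A, hM, hu⟩ := hext z hzA (e n) (Set.mem_range_self n) L.toFinset
    obtain ⟨hch', hnd', hz'⟩ := hM.extend hch hnd hz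
    refine ⟨⟨L ++ M, hch', hnd', z', hz'A, hz'⟩, L.prefix_append M, ?_, ?_⟩
    · simpa using List.length_pos_iff.2 hM.ne_nil
    · rcases hu with hu | hu
      · exact List.mem_append_left M (List.mem_toFinset.1 hu)
      · exact List.mem_append_right L hu
  choose g hg using hstep
  let F : ℕ → {L // Good L} := fun n =>
    Nat.rec ⟨[a₀], List.isChain_singleton a₀, List.nodup_singleton a₀, a₀, ha₀, rfl⟩ g n
  obtain ⟨f, hf, hfR, hfF⟩ := exists_injective_isChain_of_isPrefix (F := fun n => (F n).1)
    (fun n => (hg n (F n)).1) (fun n => (hg n (F n)).2.1) (fun n => (F n).2.2.1)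
    (fun n => (F n).2.1)
  exact ⟨f, hf, hfR, by rintro _ ⟨n, rfl⟩; exact hfF (n + 1) _ (hg n (F n)).2.2⟩

structure IsAnchorSet (R : α → α → Prop) (X Y A : Set α) : Prop where
  common_left : ∀ x ∈ X, ∀ x' ∈ X, ({w | R x w} ∩ {w | R x' w}).Infinite
  common_right : ∀ y ∈ Y, ∀ y' ∈ Y, ({w | R y w} ∩ {w | R y' w}).Infinite
  subset : A ⊆ X
  infinite : A.Infinite
  infinite_nbrs : ∀ a ∈ A, ({w | R a w} ∩ Y).Infinite

namespace IsAnchorSet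

variable [DecidableEq α] {X Y A : Set α} {z u : α}

theorem exists_isFreshPath_to_anchor (hR : Std.Symm R) (h : IsAnchorSet R X Y A)
    (hu : u ∈ X ∪ Y) (T : Finset α) : ∃ M z', z' ∈ A ∧ IsFreshPath R T u M z' := by
  obtain ⟨z', hz'A, hz'T⟩ := h.infinite.exists_notMem_finset T
  rcases hu with hu | hu
  · obtain ⟨M, hM⟩ :=
      exists_isFreshPath_of_infinite_inter hR (h.common_left u hu z' (h.subset hz'A)) hz'T
    exact ⟨M, z', hz'A, hM⟩
  · obtain ⟨w, ⟨hz'w, hwY⟩, hw⟩ := (h.infinite_nbrs z' hz'A).exists_notMem_finset (insert z' T)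
    obtain ⟨M, hM⟩ := exists_isFreshPath_of_infinite_inter hR (h.common_right u hu w hwY) hw
    refine ⟨M ++ [z'], z', hz'A,
      (hM.mono (Finset.subset_insert _ _)).append (.single (hR.symm _ _ hz'w) ?_)⟩
    simpa [hz'T] using fun hz'M => hM.2.2.1 z' hz'M (Finset.mem_insert_self z' T)

theorem exists_isFreshPath_from_anchor (hR : Std.Symm R) (h : IsAnchorSet R X Y A)
    {T : Finset α} (hz : z ∈ A) (hu : u ∈ X ∪ Y) (huT : u ∉ T) :
    ∃ M, IsFreshPath R T z M u := by
  rcases hu with hu | hu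
  · exact exists_isFreshPath_of_infinite_inter hR (h.common_left z (h.subset hz) u hu) huT
  · obtain ⟨w, ⟨hzw, hwY⟩, hw⟩ := (h.infinite_nbrs z hz).exists_notMem_finset (insert u T)
    rw [Finset.mem_insert, not_or] at hw
    obtain ⟨M, hM⟩ := exists_isFreshPath_of_infinite_inter (T := T ∪ [w].toFinset) hR
      (h.common_right w hwY u hu) (by simp [huT, Ne.symm hw.1])
    exact ⟨[w] ++ M, (IsFreshPath.single hzw hw.2).append hM⟩

theorem exists_isFreshPath_through (hR : Std.Symm R) (h : IsAnchorSet R X Y A)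
    (hz : z ∈ A) (hu : u ∈ X ∪ Y) (T : Finset α) :
    ∃ M z', z' ∈ A ∧ IsFreshPath R T z M z' ∧ (u ∈ T ∨ u ∈ M) := by
  by_cases huT : u ∈ T
  · obtain ⟨M, z', hz'A, hM⟩ := h.exists_isFreshPath_to_anchor hR (.inl (h.subset hz)) T
    exact ⟨M, z', hz'A, hM, .inl huT⟩
  · obtain ⟨M₁, hM₁⟩ := h.exists_isFreshPath_from_anchor hR hz hu huT
    obtain ⟨M₂, z', hz'A, hM₂⟩ := h.exists_isFreshPath_to_anchor hR hu (T ∪ M₁.toFinset)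
    exact ⟨M₁ ++ M₂, z', hz'A, hM₁.append hM₂, .inr (List.mem_append_left _ hM₁.mem_of_getLast)⟩

theorem exists_injective_isChain_covering [Countable α] (hR : Std.Symm R)
    (h : IsAnchorSet R X Y A) :
    ∃ f : ℕ → α, Function.Injective f ∧ (∀ j, R (f j) (f (j + 1))) ∧ X ∪ Y ⊆ Set.range f :=
  exists_injective_isChain_of_forall_exists_isFreshPath
    (h.infinite.nonempty.mono (h.subset.trans Set.subset_union_left)) h.infinite.nonempty
    fun _ hz _ hu T => h.exists_isFreshPath_through hR hz hu T

end IsAnchorSet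

theorem infinite_inter_of_mem_ultrafilterOn {X B C : Set ℕ+} {U : Set (Set ℕ+)}
    (hU : IsUltrafilterOn X U) (hnp : NonprincipalOn U) (hB : B ∩ X ∈ U) (hC : C ∩ X ∈ U) :
    (B ∩ C).Infinite :=
  Set.Infinite.mono (fun _ hx => ⟨hx.1.1, hx.2.1⟩) (hnp _ (hU.2.1 _ hB _ hC))

theorem bipAdj_symm (V W : Set ℕ+) : Std.Symm (bipAdj V W) :=
  ⟨fun _ _ h => h.symm.imp And.symm And.symm⟩

theorem not_bipAdj_of_mem_left {V W : Set ℕ+} {x y : ℕ+} (hdisj : Disjoint V W) (hx : x ∈ V)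
    (hy : y ∈ V) : ¬bipAdj V W x y := by
  rintro (⟨-, hyW⟩ | ⟨hxW, -⟩)
  · exact hdisj.notMem_of_mem_left hy hyW
  · exact hdisj.notMem_of_mem_left hx hxW

theorem not_bipAdj_of_mem_right {V W : Set ℕ+} {x y : ℕ+} (hdisj : Disjoint V W) (hx : x ∈ W)
    (hy : y ∈ W) : ¬bipAdj V W x y := by
  rintro (⟨hxV, -⟩ | ⟨-, hyV⟩)
  · exact hdisj.notMem_of_mem_left hxV hx
  · exact hdisj.notMem_of_mem_left hyV hy

theorem nbhd_symm {k : ℕ} {Adj : ℕ+ → ℕ+ → Prop} (hAdj : Std.Symm Adj) (c : Sym2 ℕ+ → Fin k)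
    (i : Fin k) : Std.Symm fun x y => y ∈ nbhd Adj c i x :=
  ⟨fun _ _ h => ⟨hAdj.symm _ _ h.1, Sym2.eq_swap ▸ h.2⟩⟩

theorem stmt_10_general (V W : Set ℕ+)
    (hdisj : Disjoint V W)
    (k : ℕ) (c : Sym2 ℕ+ → Fin k) (i₀ : Fin k)
    (V' W' : Set ℕ+)
    (𝒱 𝒲 : Set (Set ℕ+))
    (h𝒱 : IsUltrafilterOn V' 𝒱) (h𝒱np : NonprincipalOn 𝒱)
    (h𝒲 : IsUltrafilterOn W' 𝒲) (h𝒲np : NonprincipalOn 𝒲)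
    (Vi Wi Ustar : Set ℕ+)
    (hVi : Vi = {v | v ∈ V ∧ nbhd (bipAdj V W) c i₀ v ∩ W' ∈ 𝒲})
    (hWi : Wi = {w | w ∈ W ∧ nbhd (bipAdj V W) c i₀ w ∩ V' ∈ 𝒱})
    (hUstar : Ustar = {v | v ∈ Vi ∪ Wi ∧ (nbhd (bipAdj V W) c i₀ v ∩ (Vi ∪ Wi)).Infinite})
    (hUinf : Ustar.Infinite) :
    ∃ P : Set ℕ+, IsMonoPath (bipAdj V W) c i₀ P ∧ Vi ∪ Wi ⊆ P := by
  let R : ℕ+ → ℕ+ → Prop := fun x y => y ∈ nbhd (bipAdj V W) c i₀ x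
  have hR : Std.Symm R := nbhd_symm (bipAdj_symm V W) c i₀
  have hVi_common : ∀ x ∈ Vi, ∀ x' ∈ Vi, ({w | R x w} ∩ {w | R x' w}).Infinite := by
    subst hVi
    exact fun x hx x' hx' => infinite_inter_of_mem_ultrafilterOn h𝒲 h𝒲np hx.2 hx'.2
  have hWi_common : ∀ y ∈ Wi, ∀ y' ∈ Wi, ({w | R y w} ∩ {w | R y' w}).Infinite := by
    subst hWi
    exact fun y hy y' hy' => infinite_inter_of_mem_ultrafilterOn h𝒱 h𝒱np hy.2 hy'.2
  have hVi_indep : ∀ x ∈ Vi, ∀ x' ∈ Vi, ¬R x x' := by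
    subst hVi
    exact fun x hx x' hx' h => not_bipAdj_of_mem_left hdisj hx.1 hx'.1 h.1
  have hWi_indep : ∀ y ∈ Wi, ∀ y' ∈ Wi, ¬R y y' := by
    subst hWi
    exact fun y hy y' hy' h => not_bipAdj_of_mem_right hdisj hy.1 hy'.1 h.1
  have hsplit : Ustar = Ustar ∩ Vi ∪ Ustar ∩ Wi := by
    rw [← Set.inter_union_distrib_left, Set.inter_eq_left.2 (hUstar ▸ fun v hv => hv.1)]
  obtain ⟨f, hf, hfR, hfS⟩ : ∃ f : ℕ → ℕ+, Function.Injective f ∧ (∀ j, R (f j) (f (j + 1))) ∧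
      Vi ∪ Wi ⊆ Set.range f := by
    rcases Set.infinite_union.1 (hsplit ▸ hUinf) with hA | hA
    · refine IsAnchorSet.exists_injective_isChain_covering hR
        ⟨hVi_common, hWi_common, Set.inter_subset_right, hA, fun a ha => ?_⟩
      exact infinite_nbrs_inter_right hVi_indep ha.2 (hUstar ▸ ha.1).2
    · rw [Set.union_comm]
      refine IsAnchorSet.exists_injective_isChain_covering hR
        ⟨hWi_common, hVi_common, Set.inter_subset_right, hA, fun a ha => ?_⟩
      exact infinite_nbrs_inter_right hWi_indep ha.2 (Set.union_comm Vi Wi ▸ (hUstar ▸ ha.1).2)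
  exact ⟨Set.range f, .inr ⟨f, hf, hfR, rfl⟩, hfS⟩

/-- Lemma 3.1 (second part): with
`V_{i₀} = {v ∈ V : N_{i₀}(v) ∩ W' ∈ 𝒲'}` and
`W_{i₀} = {w ∈ W : N_{i₀}(w) ∩ V' ∈ 𝒱'}`, if the set `U*_{i₀}` of vertices
`v ∈ V_{i₀} ∪ W_{i₀}` with `N_{i₀}(v) ∩ (V_{i₀} ∪ W_{i₀})` infinite is itself
infinite, then there is a path of colour `i₀` containing `V_{i₀} ∪ W_{i₀}`. -/
theorem stmt_10 (V W : Set ℕ+) (hV : V.Infinite) (hW : W.Infinite)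
    (hdisj : Disjoint V W) (hunion : V ∪ W = Set.univ)
    (k : ℕ) (c : Sym2 ℕ+ → Fin k) (i₀ : Fin k)
    (V' W' : Set ℕ+) (hV'sub : V' ⊆ V) (hW'sub : W' ⊆ W)
    (hV'inf : V'.Infinite) (hW'inf : W'.Infinite)
    (𝒱 𝒲 : Set (Set ℕ+))
    (h𝒱 : IsUltrafilterOn V' 𝒱) (h𝒱np : NonprincipalOn 𝒱)
    (h𝒲 : IsUltrafilterOn W' 𝒲) (h𝒲np : NonprincipalOn 𝒲)
    (Vi Wi Ustar : Set ℕ+)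
    (hVi : Vi = {v | v ∈ V ∧ nbhd (bipAdj V W) c i₀ v ∩ W' ∈ 𝒲})
    (hWi : Wi = {w | w ∈ W ∧ nbhd (bipAdj V W) c i₀ w ∩ V' ∈ 𝒱})
    (hUstar : Ustar = {v | v ∈ Vi ∪ Wi ∧ (nbhd (bipAdj V W) c i₀ v ∩ (Vi ∪ Wi)).Infinite})
    (hUinf : Ustar.Infinite) :
    ∃ P : Set ℕ+, IsMonoPath (bipAdj V W) c i₀ P ∧ Vi ∪ Wi ⊆ P :=
  stmt_10_general V W hdisj k c i₀ V' W' 𝒱 𝒲 h𝒱 h𝒱np h𝒲 h𝒲np Vi Wi Ustar hVi hWi hUstar hUinf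
end
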